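/- With the setup of the lower bound construction (P = L ∪ B ∪ R as above, a k-coloring in which every bottomless rectangle with ≥ b points contains all colors, ℓ low colors being the colors used on B), the total number of low points in L is at least ∑_{i=0}^{ℓ−1} ⌊n/(b−i)⌋. -/

import Mathlib

open scoped Classical

/-- Membership in the bottomless rectangle `{(x,y) : a ≤ x ≤ b, y ≤ c}`. -/
def InBottomless (a b c : ℝ) (p : ℝ × ℝ) : Prop :=
  a ≤ p.1 ∧ p.1 ≤ b ∧ p.2 ≤ c

/-- The left part `L = {(i - n, 2i) : i ∈ [n]}`. -/
noncomputable def Lset (n : ℕ) : Finset (ℝ × ℝ) :=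
  (Finset.Icc 1 n).image (fun i => ((i : ℝ) - (n : ℝ), 2 * (i : ℝ)))

/-- The bottom part `B = {(i, 0) : i ∈ [a]}`. -/
noncomputable def Bset (a : ℕ) : Finset (ℝ × ℝ) :=
  (Finset.Icc 1 a).image (fun i => ((i : ℝ), 0))

/-- The right part `R = {(n + a + i, 2n + 1 - 2i) : i ∈ [n]}`. -/
noncomputable def Rset (n a : ℕ) : Finset (ℝ × ℝ) :=
  (Finset.Icc 1 n).image
    (fun i => ((n : ℝ) + (a : ℝ) + (i : ℝ), 2 * (n : ℝ) + 1 - 2 * (i : ℝ)))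

/-- The low colors: those used at least once on a point of `B`. -/
noncomputable def lowColors (a k : ℕ) (χ : ℝ × ℝ → Fin k) : Finset (Fin k) :=
  Finset.univ.filter (fun c => ∃ q ∈ Bset a, χ q = c)

/-!
For a low color `c`, let `j` be the number of points of `B` to the left of the first point of
color `c`; these `j` points avoid `c`. A bottomless rectangle holding them together with `b - j`
consecutive points of `L` contains `b` points, hence color `c`, necessarily in `L`. Cutting `L`
into `⌊n / (b - j)⌋` disjoint blocks of `b - j` consecutive points gives as many points of color
`c` in `L`. Distinct low colors have distinct `j < b`, so the `r`-th smallest value of `j` is at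
least `r`, and `n / (b - j)` increases with `j`.
-/
open Finset

theorem sum_range_card_le_sum_of_monotoneOn {M : Type*} [AddCommMonoid M] [PartialOrder M]
    [IsOrderedAddMonoid M] {g : ℕ → M} {m : ℕ} (hg : MonotoneOn g (Set.Iio m))
    {s : Finset ℕ} (hs : s ⊆ range m) :
    ∑ i ∈ range #s, g i ≤ ∑ x ∈ s, g x := by
  induction s using Finset.induction_on_max with
  | empty => simp
  | insert x s hlt ih =>
    have hx : x ∉ s := fun h => lt_irrefl x (hlt x h)
    have hcard : #s ≤ x := by
      simpa using card_le_card (fun y hy => mem_range.2 (hlt y hy) : s ⊆ range x)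
    have hxm : x < m := mem_range.1 (hs (mem_insert_self x s))
    rw [card_insert_of_notMem hx, sum_range_succ, sum_insert hx, add_comm]
    exact add_le_add (hg (hcard.trans_lt hxm) hxm hcard) (ih ((subset_insert x s).trans hs))

theorem monotoneOn_div_sub (n b : ℕ) : MonotoneOn (fun x => n / (b - x)) (Set.Iio b) :=
  fun _ _ _ hy hxy => Nat.div_le_div_left (by omega) (Nat.sub_pos_of_lt hy)

noncomputable def Lpt (n i : ℕ) : ℝ × ℝ := ((i : ℝ) - n, 2 * (i : ℝ))

noncomputable def Bpt (i : ℕ) : ℝ × ℝ := ((i : ℝ), 0)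

theorem Lpt_injective (n : ℕ) : Function.Injective (Lpt n) := by
  intro i i' h
  simpa [Lpt] using h

theorem Bpt_injective : Function.Injective Bpt := by
  intro i i' h
  simpa [Bpt] using h

theorem Lset_eq_image (n : ℕ) : Lset n = (Icc 1 n).image (Lpt n) := by
  ext q
  simp [Lset, Lpt]

theorem Bset_eq_image (a : ℕ) : Bset a = (Icc 1 a).image Bpt := by
  ext q
  simp [Bset, Bpt]

theorem Rset_eq_image (n a : ℕ) :
    Rset n a = (Icc 1 n).image (fun i : ℕ => ((n : ℝ) + a + i, 2 * (n : ℝ) + 1 - 2 * i)) := by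
  ext q
  simp [Rset]

section Window

variable {n a lo hi j : ℕ}

theorem Lpt_mem_window {i : ℕ} (hlo : lo ≤ i) (hhi : i ≤ hi) (hin : i ≤ n) :
    InBottomless ((lo : ℝ) - n) j (2 * hi) (Lpt n i) := by
  have : (lo : ℝ) ≤ i := by exact_mod_cast hlo
  have : (i : ℝ) ≤ hi := by exact_mod_cast hhi
  have : (i : ℝ) ≤ n := by exact_mod_cast hin
  refine ⟨?_, ?_, ?_⟩ <;> simp only [Lpt] <;> linarith [(j.cast_nonneg : (0 : ℝ) ≤ j)]

theorem Bpt_mem_window {i : ℕ} (hlo : lo ≤ n) (hij : i ≤ j) :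
    InBottomless ((lo : ℝ) - n) j (2 * hi) (Bpt i) := by
  have : (lo : ℝ) ≤ n := by exact_mod_cast hlo
  have : (i : ℝ) ≤ j := by exact_mod_cast hij
  refine ⟨?_, ?_, ?_⟩ <;> simp only [Bpt] <;>
    linarith [(i.cast_nonneg : (0 : ℝ) ≤ i), (hi.cast_nonneg : (0 : ℝ) ≤ hi)]

theorem eq_Lpt_or_eq_Bpt_of_window {q : ℝ × ℝ} (hj : j ≤ a)
    (hq : q ∈ Lset n ∪ Bset a ∪ Rset n a) (hw : InBottomless ((lo : ℝ) - n) j (2 * hi) q) :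
    (∃ i ∈ Icc lo hi, q = Lpt n i) ∨ ∃ i ∈ Icc 1 j, q = Bpt i := by
  simp only [Lset_eq_image, Bset_eq_image, Rset_eq_image, mem_union, mem_image, mem_Icc] at hq
  rcases hq with (⟨i, -, rfl⟩ | ⟨i, ⟨hi₁, -⟩, rfl⟩) | ⟨i, ⟨hi₁, -⟩, rfl⟩
  · obtain ⟨hw₁, -, hw₃⟩ := hw
    simp only [Lpt] at hw₁ hw₃
    refine .inl ⟨i, mem_Icc.2 ⟨?_, ?_⟩, rfl⟩
    · exact_mod_cast (show (lo : ℝ) ≤ i by linarith)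
    · exact_mod_cast (show (i : ℝ) ≤ hi by linarith)
  · have hw₂ : (i : ℝ) ≤ j := hw.2.1
    exact .inr ⟨i, mem_Icc.2 ⟨hi₁, by exact_mod_cast hw₂⟩, rfl⟩
  · have hw₂ : (n : ℝ) + a + i ≤ j := hw.2.1
    have : (1 : ℝ) ≤ i := by exact_mod_cast hi₁
    have : (j : ℝ) ≤ a := by exact_mod_cast hj
    linarith [(n.cast_nonneg : (0 : ℝ) ≤ n)]

theorem le_card_filter_window (hlo : 1 ≤ lo) (hlohi : lo ≤ hi) (hhi : hi ≤ n) (hj : j ≤ a) :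
    hi + 1 - lo + j ≤
      #((Lset n ∪ Bset a ∪ Rset n a).filter (InBottomless ((lo : ℝ) - n) j (2 * hi))) := by
  have hdisj : Disjoint ((Icc lo hi).image (Lpt n)) ((Icc 1 j).image Bpt) := by
    simp only [disjoint_left, mem_image, mem_Icc, not_exists, not_and]
    rintro _ ⟨i, ⟨hi₁, -⟩, rfl⟩ i' - h
    have : (1 : ℝ) ≤ i := by exact_mod_cast hlo.trans hi₁
    simp only [Lpt, Bpt, Prod.mk.injEq] at h
    linarith [h.2]
  have hsub : (Icc lo hi).image (Lpt n) ∪ (Icc 1 j).image Bpt ⊆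
      (Lset n ∪ Bset a ∪ Rset n a).filter (InBottomless ((lo : ℝ) - n) j (2 * hi)) := by
    simp only [union_subset_iff, image_subset_iff, mem_filter, mem_Icc, Lset_eq_image,
      Bset_eq_image, mem_union, mem_image]
    refine ⟨fun i hi' => ⟨.inl (.inl ⟨i, ⟨by omega, by omega⟩, rfl⟩), ?_⟩,
      fun i hi' => ⟨.inl (.inr ⟨i, ⟨hi'.1, by omega⟩, rfl⟩), ?_⟩⟩
    · exact Lpt_mem_window hi'.1 hi'.2 (by omega)
    · exact Bpt_mem_window (hlohi.trans hhi) hi'.2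
  calc hi + 1 - lo + j = #((Icc lo hi).image (Lpt n) ∪ (Icc 1 j).image Bpt) := by
        rw [card_union_of_disjoint hdisj, card_image_of_injective _ (Lpt_injective n),
          card_image_of_injective _ Bpt_injective, Nat.card_Icc, Nat.card_Icc, Nat.add_sub_cancel]
    _ ≤ _ := card_le_card hsub

end Window

def IsBottomlessPolychromatic {k : ℕ} (S : Finset (ℝ × ℝ)) (b : ℕ) (χ : ℝ × ℝ → Fin k) :
    Prop :=
  ∀ a' b' c' : ℝ, a' ≤ b' → b ≤ #(S.filter (InBottomless a' b' c')) →
    ∀ col : Fin k, ∃ q ∈ S.filter (InBottomless a' b' c'), χ q = col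

section Coloring

variable {n a b k : ℕ} {χ : ℝ × ℝ → Fin k} {c : Fin k}

theorem exists_Lpt_color_of_window
    (hχ : IsBottomlessPolychromatic (Lset n ∪ Bset a ∪ Rset n a) b χ)
    {lo hi j : ℕ} (hj : j ≤ a) (hfree : ∀ i ∈ Icc 1 j, χ (Bpt i) ≠ c) (hlo : 1 ≤ lo)
    (hlohi : lo ≤ hi) (hhi : hi ≤ n) (hb : b ≤ hi + 1 - lo + j) :
    ∃ i ∈ Icc lo hi, χ (Lpt n i) = c := by
  have hle : (lo : ℝ) - n ≤ j := by
    have : (lo : ℝ) ≤ n := by exact_mod_cast hlohi.trans hhi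
    linarith [(j.cast_nonneg : (0 : ℝ) ≤ j)]
  obtain ⟨q, hq, hqc⟩ := hχ _ _ _ hle (hb.trans (le_card_filter_window hlo hlohi hhi hj)) c
  rw [mem_filter] at hq
  rcases eq_Lpt_or_eq_Bpt_of_window hj hq.1 hq.2 with ⟨i, hi, rfl⟩ | ⟨i, hi, rfl⟩
  · exact ⟨i, hi, hqc⟩
  · exact absurd hqc (hfree i hi)

theorem div_le_card_filter_Lset
    (hχ : IsBottomlessPolychromatic (Lset n ∪ Bset a ∪ Rset n a) b χ)
    {j : ℕ} (hj : j ≤ a) (hjb : j < b) (hfree : ∀ i ∈ Icc 1 j, χ (Bpt i) ≠ c) :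
    n / (b - j) ≤ #((Lset n).filter (χ · = c)) := by
  set d := b - j
  have hd0 : 0 < d := by omega
  have hblock : ∀ t < n / d, ∃ i ∈ Icc (t * d + 1) (t * d + d), χ (Lpt n i) = c := by
    intro t ht
    have : (t + 1) * d ≤ n := (Nat.le_div_iff_mul_le hd0).1 ht
    rw [add_one_mul] at this
    exact exists_Lpt_color_of_window hχ hj hfree (by omega) (by omega) this (by omega)
  have hsurj : Set.SurjOn (fun i => (i - 1) / d)
      ((Icc 1 n).filter (fun i => χ (Lpt n i) = c) : Set ℕ) (range (n / d) : Set ℕ) := by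
    intro t ht
    obtain ⟨i, hi, hic⟩ := hblock t (mem_range.1 ht)
    have htn : (t + 1) * d ≤ n := (Nat.le_div_iff_mul_le hd0).1 (mem_range.1 ht)
    rw [mem_Icc] at hi
    rw [add_one_mul] at htn
    refine ⟨i, mem_filter.2 ⟨mem_Icc.2 ⟨by omega, by omega⟩, hic⟩,
      Nat.div_eq_of_lt_le (by omega) (by rw [add_one_mul]; omega)⟩
  calc n / d = #(range (n / d)) := (card_range _).symm
    _ ≤ #((Icc 1 n).filter (fun i => χ (Lpt n i) = c)) := card_le_card_of_surjOn _ hsurj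
    _ = #((Lset n).filter (χ · = c)) := by
      rw [Lset_eq_image, filter_image, card_image_of_injective _ (Lpt_injective n)]

/-- The first point of `B` of color `c` is `Bpt (firstBIndex a χ c + 1)`: this 0-based index is the
number of points of `B` to its left. -/
noncomputable def firstBIndex (a : ℕ) (χ : ℝ × ℝ → Fin k) (c : Fin k) : ℕ :=
  sInf {j | j < a ∧ χ (Bpt (j + 1)) = c}

theorem firstBIndex_spec (hc : c ∈ lowColors a k χ) :
    firstBIndex a χ c < a ∧ χ (Bpt (firstBIndex a χ c + 1)) = c := by
  obtain ⟨i, hi, hic⟩ : ∃ i ∈ Icc 1 a, χ (Bpt i) = c := by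
    simpa [lowColors, Bset_eq_image] using hc
  rw [mem_Icc] at hi
  exact Nat.sInf_mem (s := {j | j < a ∧ χ (Bpt (j + 1)) = c})
    ⟨i - 1, by omega, by rwa [Nat.sub_add_cancel hi.1]⟩

theorem color_ne_of_le_firstBIndex (hc : c ∈ lowColors a k χ) {i : ℕ}
    (hi : i ∈ Icc 1 (firstBIndex a χ c)) : χ (Bpt i) ≠ c := by
  rw [mem_Icc] at hi
  have := (firstBIndex_spec hc).1
  intro hic
  exact Nat.notMem_of_lt_sInf (show i - 1 < firstBIndex a χ c by omega)
    ⟨by omega, by rwa [Nat.sub_add_cancel hi.1]⟩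

theorem firstBIndex_injOn : Set.InjOn (firstBIndex a χ) (lowColors a k χ) :=
  fun c hc c' hc' h => by rw [← (firstBIndex_spec hc).2, ← (firstBIndex_spec hc').2, h]

end Coloring

theorem low_points_in_L_general (n a b k : ℕ)
    (hab : a < b)
    (χ : ℝ × ℝ → Fin k)
    (hvalid : ∀ a' b' c' : ℝ, a' ≤ b' →
      b ≤ ((Lset n ∪ Bset a ∪ Rset n a).filter (InBottomless a' b' c')).card →
      ∀ col : Fin k,
        ∃ q ∈ (Lset n ∪ Bset a ∪ Rset n a).filter (InBottomless a' b' c'), χ q = col) :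
    ∑ i ∈ Finset.range (lowColors a k χ).card, n / (b - i) ≤
      ((Lset n).filter (fun q => χ q ∈ lowColors a k χ)).card := by
  set low := lowColors a k χ
  have hlt : low.image (firstBIndex a χ) ⊆ range b := by
    simp only [image_subset_iff, mem_range]
    exact fun c hc => (firstBIndex_spec hc).1.trans hab
  calc ∑ i ∈ range #low, n / (b - i)
      = ∑ i ∈ range #(low.image (firstBIndex a χ)), n / (b - i) := by
        rw [card_image_of_injOn firstBIndex_injOn]
    _ ≤ ∑ j ∈ low.image (firstBIndex a χ), n / (b - j) :=
        sum_range_card_le_sum_of_monotoneOn (monotoneOn_div_sub n b) hlt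
    _ = ∑ c ∈ low, n / (b - firstBIndex a χ c) := sum_image firstBIndex_injOn
    _ ≤ ∑ c ∈ low, #((Lset n).filter (χ · = c)) := by
        refine sum_le_sum fun c hc => div_le_card_filter_Lset hvalid ?_ ?_
          fun _ => color_ne_of_le_firstBIndex hc
        all_goals have := (firstBIndex_spec hc).1; omega
    _ = #((Lset n).filter (χ · ∈ low)) := sum_card_fiberwise_eq_card_filter _ _ _

/-- Low points lemma: with `ℓ` low colors, `L` contains at least
`∑_{i=0}^{ℓ-1} ⌊n / (b - i)⌋` low points. -/
theorem low_points_in_L (n a b k : ℕ)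
    (hn : 1 ≤ n) (hab : a < b) (hk : 1 ≤ k)
    (χ : ℝ × ℝ → Fin k)
    (hvalid : ∀ a' b' c' : ℝ, a' ≤ b' →
      b ≤ ((Lset n ∪ Bset a ∪ Rset n a).filter (InBottomless a' b' c')).card →
      ∀ col : Fin k,
        ∃ q ∈ (Lset n ∪ Bset a ∪ Rset n a).filter (InBottomless a' b' c'), χ q = col) :
    ∑ i ∈ Finset.range (lowColors a k χ).card, n / (b - i) ≤
      ((Lset n).filter (fun q => χ q ∈ lowColors a k χ)).card :=
  low_points_in_L_general n a b k hab χ hvalid
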